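/- arXiv:1812.00151 — 9 statements merged into one kernel-verified Lean document; each statement's English description precedes it below -/
import Mathlib

section
/- Let α be a finite type, m ≥ 1 a natural number, and f : Finset α → ℝ a monotone submodular set function with f(∅) = 0. Let G₀, G₁, …, G_m be a greedy sequence: G₀ = ∅ and for each j < m, G_{j+1} = insert a_j G_j for some element a_j satisfying f(insert a_j G_j) ≥ f(insert a G_j) for every a : α. Then for every finset S of cardinality at most m, f(G_m) ≥ (1 − 1/e) · f(S), where e = exp 1. -/
/-! Submodularity bounds `f S - f B` by the sum of the marginal gains of the elements of `S` over
`B`, hence by `#S` times the gain of the greedy choice. So each greedy step closes at least a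
`1/m` fraction of the gap `f S - f (G j)`, and after `m` steps the gap is at most
`(1 - 1/m)^m f S ≤ e⁻¹ f S`. -/

open Finset

section Greedy

variable {α : Type*} [DecidableEq α] {f : Finset α → ℝ}

theorem sub_le_sum_marginal_of_submodular
    (hsubmod : ∀ X Y : Finset α, X ⊆ Y → ∀ s ∉ Y, f (insert s X) - f X ≥ f (insert s Y) - f Y)
    (B T : Finset α) : f (B ∪ T) - f B ≤ ∑ s ∈ T, (f (insert s B) - f B) := by
  induction T using Finset.induction_on with
  | empty => simp
  | insert t T ht ih =>
    rw [sum_insert ht, union_insert]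
    by_cases htBT : t ∈ B ∪ T
    · have htB : t ∈ B := (mem_union.1 htBT).resolve_right ht
      rw [insert_eq_of_mem htBT, insert_eq_of_mem htB]
      linarith
    · linarith [hsubmod B (B ∪ T) subset_union_left t htBT]

theorem sub_le_card_mul_greedy_gain
    (hmono : ∀ S T : Finset α, S ⊆ T → f S ≤ f T)
    (hsubmod : ∀ X Y : Finset α, X ⊆ Y → ∀ s ∉ Y, f (insert s X) - f X ≥ f (insert s Y) - f Y)
    {B : Finset α} {a : α} (hgreedy : ∀ a' : α, f (insert a' B) ≤ f (insert a B))
    (S : Finset α) : f S - f B ≤ #S * (f (insert a B) - f B) :=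
  calc f S - f B ≤ f (B ∪ S) - f B := by linarith [hmono S (B ∪ S) subset_union_right]
    _ ≤ ∑ s ∈ S, (f (insert s B) - f B) := sub_le_sum_marginal_of_submodular hsubmod B S
    _ ≤ ∑ _s ∈ S, (f (insert a B) - f B) := sum_le_sum fun s _ => by linarith [hgreedy s]
    _ = #S * (f (insert a B) - f B) := by rw [sum_const, nsmul_eq_mul]

theorem sub_greedy_insert_le
    (hmono : ∀ S T : Finset α, S ⊆ T → f S ≤ f T)
    (hsubmod : ∀ X Y : Finset α, X ⊆ Y → ∀ s ∉ Y, f (insert s X) - f X ≥ f (insert s Y) - f Y)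
    {B : Finset α} {a : α} (hgreedy : ∀ a' : α, f (insert a' B) ≤ f (insert a B))
    {S : Finset α} {m : ℕ} (hm : 0 < m) (hS : #S ≤ m) :
    f S - f (insert a B) ≤ (1 - 1 / m) * (f S - f B) := by
  have hgain : 0 ≤ f (insert a B) - f B := sub_nonneg.2 (hmono _ _ (subset_insert a B))
  have hgap : f S - f B ≤ (f (insert a B) - f B) * m := by
    rw [mul_comm]
    exact (sub_le_card_mul_greedy_gain hmono hsubmod hgreedy S).trans
      (mul_le_mul_of_nonneg_right (by exact_mod_cast hS) hgain)
  have hfraction : (f S - f B) / m ≤ f (insert a B) - f B :=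
    (div_le_iff₀ (by exact_mod_cast hm)).2 hgap
  have hexpand : (1 - 1 / (m : ℝ)) * (f S - f B) = (f S - f B) - (f S - f B) / m := by ring
  linarith

end Greedy

theorem stmt_1_general {α : Type*} [DecidableEq α] (m : ℕ) (hm : 1 ≤ m)
    (f : Finset α → ℝ)
    (hmono : ∀ S T : Finset α, S ⊆ T → f S ≤ f T)
    (hsubmod : ∀ X Y : Finset α, X ⊆ Y → ∀ s ∉ Y,
      f (insert s X) - f X ≥ f (insert s Y) - f Y)
    (hempty : f ∅ = 0)
    (G : ℕ → Finset α)
    (hG0 : G 0 = ∅)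
    (hGstep : ∀ j < m, ∃ a : α, G (j + 1) = insert a (G j) ∧
      ∀ a' : α, f (insert a' (G j)) ≤ f (insert a (G j))) :
    ∀ S : Finset α, S.card ≤ m → (1 - 1 / Real.exp 1) * f S ≤ f (G m) := by
  intro S hS
  have hfS : 0 ≤ f S := hempty ▸ hmono ∅ S (empty_subset S)
  have hratio : 0 ≤ 1 - 1 / (m : ℝ) :=
    sub_nonneg.2 (div_le_one_of_le₀ (by exact_mod_cast hm) (Nat.cast_nonneg m))
  have hgap : f S - f (G m) ≤ (1 - 1 / (m : ℝ)) ^ m * (f S - f (G 0)) :=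
    le_geom (u := fun j => f S - f (G j)) hratio m fun j hj => by
      obtain ⟨a, hGa, hgreedy⟩ := hGstep j hj
      simp only [hGa]
      exact sub_greedy_insert_le hmono hsubmod hgreedy hm hS
  have hexp : (1 - 1 / (m : ℝ)) ^ m ≤ 1 / Real.exp 1 := by
    simpa [Real.exp_neg] using
      Real.one_sub_div_pow_le_exp_neg (n := m) (t := 1) (by exact_mod_cast hm)
  rw [hG0, hempty, sub_zero] at hgap
  rw [sub_mul, one_mul]
  linarith [mul_le_mul_of_nonneg_right hexp hfS]

theorem stmt_1 {α : Type*} [Fintype α] [DecidableEq α] (m : ℕ) (hm : 1 ≤ m)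
    (f : Finset α → ℝ)
    (hmono : ∀ S T : Finset α, S ⊆ T → f S ≤ f T)
    (hsubmod : ∀ X Y : Finset α, X ⊆ Y → ∀ s ∉ Y,
      f (insert s X) - f X ≥ f (insert s Y) - f Y)
    (hempty : f ∅ = 0)
    (G : ℕ → Finset α)
    (hG0 : G 0 = ∅)
    (hGstep : ∀ j < m, ∃ a : α, G (j + 1) = insert a (G j) ∧
      ∀ a' : α, f (insert a' (G j)) ≤ f (insert a (G j))) :
    ∀ S : Finset α, S.card ≤ m → (1 - 1 / Real.exp 1) * f S ≤ f (G m) :=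
  stmt_1_general m hm f hmono hsubmod hempty G hG0 hGstep
end

section
/- Let α be a finite type and f : Finset α → ℝ a monotone submodular set function. Then for all finsets G and S of α, f(S) − f(G) ≤ Σ_{a ∈ S \ G} (f(insert a G) − f(G)). In particular, if |S| ≤ m and a* maximizes a ↦ f(insert a G) over all a : α, then f(insert a* G) − f(G) ≥ (f(S) − f(G)) / m. -/
theorem stmt_2 {α : Type*} [Fintype α] [DecidableEq α] (f : Finset α → ℝ)
    (hmono : ∀ S T : Finset α, S ⊆ T → f S ≤ f T)
    (hsubmod : ∀ X Y : Finset α, X ⊆ Y → ∀ s ∉ Y,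
      f (insert s X) - f X ≥ f (insert s Y) - f Y) :
    (∀ G S : Finset α, f S - f G ≤ ∑ a ∈ S \ G, (f (insert a G) - f G)) ∧
    (∀ (m : ℕ) (G S : Finset α) (astar : α), S.card ≤ m →
      (∀ a : α, f (insert a G) ≤ f (insert astar G)) →
      (f S - f G) / m ≤ f (insert astar G) - f G) := by
  have key : ∀ G S : Finset α, f S - f G ≤ ∑ a ∈ S \ G, (f (insert a G) - f G) := by
    intro G S
    have main : ∀ D : Finset α, Disjoint D G →
        f (G ∪ D) - f G ≤ ∑ a ∈ D, (f (insert a G) - f G) := by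
      intro D
      induction D using Finset.induction_on with
      | empty => simp
      | @insert a D' haD' ih =>
        intro hdisj
        have hdisj' : Disjoint D' G := (Finset.disjoint_insert_left.mp hdisj).2
        have haG : a ∉ G := (Finset.disjoint_insert_left.mp hdisj).1
        have haGD : a ∉ G ∪ D' := by simp [haG, haD']
        have hsub : G ⊆ G ∪ D' := Finset.subset_union_left
        have hs := hsubmod G (G ∪ D') hsub a haGD
        have heq : G ∪ insert a D' = insert a (G ∪ D') := by
          ext x; simp [or_comm, or_left_comm]
        rw [Finset.sum_insert haD', heq]
        have := ih hdisj'
        linarith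
    have h1 : f S ≤ f (G ∪ (S \ G)) := by
      apply hmono
      intro x hx
      by_cases hxG : x ∈ G <;> simp [hxG, hx]
    have h2 := main (S \ G) (Finset.sdiff_disjoint)
    linarith
  refine ⟨key, ?_⟩
  intro m G S astar hcard hmax
  have hgain : 0 ≤ f (insert astar G) - f G := by
    have := hmono G (insert astar G) (Finset.subset_insert _ _)
    linarith
  rcases Nat.eq_zero_or_pos m with hm | hm
  · subst hm
    have : S = ∅ := Finset.card_eq_zero.mp (Nat.le_zero.mp hcard)
    subst this
    have := hmono ∅ G (Finset.empty_subset _)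
    simp only [Nat.cast_zero, div_zero]
    linarith
  · rw [div_le_iff₀ (by exact_mod_cast hm)]
    calc f S - f G ≤ ∑ a ∈ S \ G, (f (insert a G) - f G) := key G S
      _ ≤ ∑ _a ∈ S \ G, (f (insert astar G) - f G) := by
          apply Finset.sum_le_sum; intro a _; have := hmax a; linarith
      _ = (S \ G).card * (f (insert astar G) - f G) := by
          rw [Finset.sum_const, nsmul_eq_mul]
      _ ≤ m * (f (insert astar G) - f G) := by
          apply mul_le_mul_of_nonneg_right _ hgain
          exact_mod_cast le_trans (Finset.card_le_card (Finset.sdiff_subset)) hcard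
      _ = (f (insert astar G) - f G) * m := by ring
end

section
/- Let n and k be positive integers and c : Fin n → Fin k → ℝ satisfy c i 0 ≤ c i t for all i : Fin n and t : Fin k. Define the set function f : Finset (Fin n) → ℝ by f(S) = max { max_{i : Fin n} c i (l i) : l : Fin n → Fin k with supp(l) ⊆ S }. Then f is monotone and submodular: for all finsets X ⊆ Y of Fin n and every s ∉ Y, f(X ∪ {s}) − f(X) ≥ f(Y ∪ {s}) − f(Y). -/
/-- The support of a transformation index. -/
def transformSupport {n k : ℕ} [NeZero k] (l : Fin n → Fin k) : Finset (Fin n) :=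
  Finset.univ.filter fun i => l i ≠ 0

/-- Max-over-time pooling attack set function: the maximum, over all transformation
indices supported inside `S`, of the pooled filter response `max_i c i (l i)`. -/
noncomputable def poolAttackFn {n k : ℕ} [NeZero n] [NeZero k]
    (c : Fin n → Fin k → ℝ) (S : Finset (Fin n)) : ℝ :=
  (Finset.univ.filter fun l : Fin n → Fin k => transformSupport l ⊆ S).sup'
    ⟨0, by simp [transformSupport]⟩
    (fun l => Finset.univ.sup' ⟨0, Finset.mem_univ 0⟩ (fun i => c i (l i)))

lemma pool_eq {n k : ℕ} [NeZero n] [NeZero k] (c : Fin n → Fin k → ℝ)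
    (S : Finset (Fin n)) :
    poolAttackFn c S = Finset.univ.sup' ⟨0, Finset.mem_univ 0⟩
      (fun i => if i ∈ S then Finset.univ.sup' ⟨0, Finset.mem_univ 0⟩ (c i) else c i 0) := by
  apply le_antisymm
  · apply Finset.sup'_le
    intro l hl
    simp only [Finset.mem_filter] at hl
    apply Finset.sup'_le
    intro i _
    refine le_trans ?_ (Finset.le_sup' _ (Finset.mem_univ i))
    by_cases h : i ∈ S
    · simp only [h, if_true]
      exact Finset.le_sup' _ (Finset.mem_univ (l i))
    · have hli : l i = 0 := by
        by_contra h0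
        exact h (hl.2 (by simp [transformSupport, h0]))
      simp [h, hli]
  · apply Finset.sup'_le
    intro i _
    by_cases h : i ∈ S
    · simp only [h, if_true]
      apply Finset.sup'_le
      intro t _
      have hmem : Function.update (fun _ => (0:Fin k)) i t ∈
          Finset.univ.filter fun l : Fin n → Fin k => transformSupport l ⊆ S := by
        simp only [Finset.mem_filter, Finset.mem_univ, true_and]
        intro j hj
        simp only [transformSupport, Finset.mem_filter, Finset.mem_univ, true_and] at hj
        by_cases hji : j = i
        · subst hji; exact h
        · simp [Function.update_of_ne hji] at hj
      refine le_trans ?_ (Finset.le_sup' _ hmem)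
      refine le_trans ?_ (Finset.le_sup' _ (Finset.mem_univ i))
      simp
    · simp only [h, if_false]
      have hmem : (fun _ => (0:Fin k)) ∈
          Finset.univ.filter fun l : Fin n → Fin k => transformSupport l ⊆ S := by
        simp [transformSupport]
      refine le_trans ?_ (Finset.le_sup' _ hmem)
      exact Finset.le_sup' (fun i => c i 0) (Finset.mem_univ i)

lemma pool_mono {n k : ℕ} [NeZero n] [NeZero k] (c : Fin n → Fin k → ℝ)
    {S T : Finset (Fin n)} (hST : S ⊆ T) : poolAttackFn c S ≤ poolAttackFn c T := by
  rw [pool_eq, pool_eq]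
  apply Finset.sup'_le
  intro i _
  refine le_trans ?_ (Finset.le_sup' _ (Finset.mem_univ i))
  by_cases h : i ∈ S
  · simp [h, hST h]
  · by_cases h' : i ∈ T
    · simp only [h, h', if_true, if_false]
      exact Finset.le_sup' (c i) (Finset.mem_univ 0)
    · simp [h, h']

lemma pool_insert {n k : ℕ} [NeZero n] [NeZero k] (c : Fin n → Fin k → ℝ)
    (S : Finset (Fin n)) (s : Fin n) :
    poolAttackFn c (insert s S) =
      max (poolAttackFn c S) (Finset.univ.sup' ⟨0, Finset.mem_univ 0⟩ (c s)) := by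
  apply le_antisymm
  · rw [pool_eq c (insert s S), pool_eq c S]
    apply Finset.sup'_le
    intro i _
    by_cases hi : i = s
    · subst hi
      simp only [Finset.mem_insert, true_or, if_true]
      exact le_max_right _ _
    · simp only [Finset.mem_insert, hi, false_or]
      exact le_trans (Finset.le_sup' (fun j => if j ∈ S then Finset.univ.sup' ⟨0, Finset.mem_univ 0⟩ (c j) else c j 0) (Finset.mem_univ i)) (le_max_left _ _)
  · apply max_le
    · exact pool_mono c (Finset.subset_insert s S)
    · rw [pool_eq]
      refine le_trans ?_ (Finset.le_sup' _ (Finset.mem_univ s))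
      simp

theorem stmt_6 (n k : ℕ) [NeZero n] [NeZero k]
    (c : Fin n → Fin k → ℝ) (hc : ∀ (i : Fin n) (t : Fin k), c i 0 ≤ c i t) :
    (∀ S T : Finset (Fin n), S ⊆ T → poolAttackFn c S ≤ poolAttackFn c T) ∧
    (∀ X Y : Finset (Fin n), X ⊆ Y → ∀ s ∉ Y,
      poolAttackFn c (insert s X) - poolAttackFn c X ≥
        poolAttackFn c (insert s Y) - poolAttackFn c Y) := by
  constructor
  · intro S T hST; exact pool_mono c hST
  · intro X Y hXY s _
    rw [pool_insert, pool_insert]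
    have hab : poolAttackFn c X ≤ poolAttackFn c Y := pool_mono c hXY
    set a := poolAttackFn c X
    set b := poolAttackFn c Y
    set m := Finset.univ.sup' ⟨0, Finset.mem_univ 0⟩ (c s)
    rcases le_total m a with h1 | h1
    · rw [max_eq_left h1, max_eq_left (h1.trans hab)]
      simp
    · rw [max_eq_right h1]
      rcases le_total m b with h2 | h2
      · rw [max_eq_left h2]; linarith
      · rw [max_eq_right h2]; linarith
end

section
/- Consider a recurrent neural network with T time steps and one-dimensional hidden units: fix positive integers T, k, d, word vectors V : Fin T → Fin k → EuclideanSpace ℝ (Fin d) (V p 0 the original p-th word vector, V p t its t-th replacement), input weight vector m : EuclideanSpace ℝ (Fin d), bias b : ℝ, recurrent weight w : ℝ with w > 0, output weight y : ℝ with y > 0, initial state c₀ : ℝ, and an activation φ : ℝ → ℝ that is non-decreasing and concave on ℝ. Assume every replacement does not decrease the input projection: ⟪m, V p t⟫ ≥ ⟪m, V p 0⟫ for all p, t. For a transformation index l : Fin T → Fin k define hidden states h₀(l) = c₀ and h_{p+1}(l) = φ(w · h_p(l) + ⟪m, V p (l p)⟫ + b) for 0 ≤ p < T, and the output C(l) =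 y · h_T(l). Then the set function f(S) = max { C(l) : l : Fin T → Fin k with supp(l) ⊆ S } is submodular: for all finsets X ⊆ Y of Fin T and every s ∉ Y, f(X ∪ {s}) − f(X) ≥ f(Y ∪ {s}) − f(Y). -/
open scoped RealInnerProductSpace

lemma concave_diff {φ : ℝ → ℝ} (hconc : ConcaveOn ℝ Set.univ φ) {x x' δ : ℝ}
    (hx : x ≤ x') (hδ : 0 ≤ δ) : φ (x' + δ) - φ x' ≤ φ (x + δ) - φ x := by
  rcases eq_or_lt_of_le (by linarith : x ≤ x' + δ) with hcase | hcase
  · have h1 : δ = 0 := by linarith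
    have h2 : x = x' := by linarith
    simp [h1, h2]
  · set L := x' + δ - x with hL
    have hL0 : 0 < L := by simp only [hL]; linarith
    set t := (x' - x) / L with ht
    have ht0 : 0 ≤ t := div_nonneg (by linarith) hL0.le
    have ht1 : t ≤ 1 := by rw [ht, div_le_one hL0]; linarith
    have htL : t * L = x' - x := div_mul_cancel₀ _ hL0.ne'
    have h1 := hconc.2 (Set.mem_univ x) (Set.mem_univ (x' + δ))
      (by linarith : (0:ℝ) ≤ 1 - t) ht0 (by ring)
    have h2 := hconc.2 (Set.mem_univ x) (Set.mem_univ (x' + δ))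
      ht0 (by linarith : (0:ℝ) ≤ 1 - t) (by ring)
    have e1 : (1 - t) • x + t • (x' + δ) = x' := by
      simp only [smul_eq_mul]; nlinarith [htL]
    have e2 : t • x + (1 - t) • (x' + δ) = x + δ := by
      simp only [smul_eq_mul]; nlinarith [htL]
    rw [e1] at h1
    rw [e2] at h2
    simp only [smul_eq_mul] at h1 h2
    nlinarith

section RNN

variable {T k d : ℕ} [NeZero k]
  (V : Fin T → Fin k → EuclideanSpace ℝ (Fin d))
  (m : EuclideanSpace ℝ (Fin d)) (b : ℝ) (w : ℝ) (hw : 0 < w)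
  (c₀ : ℝ) (φ : ℝ → ℝ) (hφ : Monotone φ)
  (h : ℕ → (Fin T → Fin k) → ℝ)
  (h0 : ∀ l, h 0 l = c₀)
  (hstep : ∀ (l : Fin T → Fin k) (p : Fin T),
      h (p + 1) l = φ (w * h p l + ⟪m, V p (l p)⟫ + b))

include hw hφ h0 hstep in
lemma h_mono (l l' : Fin T → Fin k)
    (hll' : ∀ p, ⟪m, V p (l p)⟫ ≤ ⟪m, V p (l' p)⟫) :
    ∀ n, n ≤ T → h n l ≤ h n l' := by
  intro n
  induction n with
  | zero => intro _; rw [h0, h0]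
  | succ n ih =>
    intro hn1
    have hnT : n < T := hn1
    set p : Fin T := ⟨n, hnT⟩ with hp
    have e1 : h (n + 1) l = φ (w * h n l + ⟪m, V p (l p)⟫ + b) := hstep l p
    have e2 : h (n + 1) l' = φ (w * h n l' + ⟪m, V p (l' p)⟫ + b) := hstep l' p
    rw [e1, e2]
    apply hφ
    have := ih (le_of_lt hn1)
    have := hll' p
    nlinarith

include hw hφ h0 hstep in
lemma h_key (hconc : ConcaveOn ℝ Set.univ φ) (s : Fin T) (l₁ l₂ l₃ l₄ : Fin T → Fin k)
    (hne : ∀ p, p ≠ s → l₂ p = l₁ p ∧ l₄ p = l₃ p)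
    (h13 : ∀ p, ⟪m, V p (l₁ p)⟫ ≤ ⟪m, V p (l₃ p)⟫)
    (hs1 : ⟪m, V s (l₁ s)⟫ = ⟪m, V s (l₃ s)⟫)
    (hs2 : ⟪m, V s (l₂ s)⟫ = ⟪m, V s (l₄ s)⟫)
    (hs12 : ⟪m, V s (l₁ s)⟫ ≤ ⟪m, V s (l₂ s)⟫) :
    ∀ n, n ≤ T → h n l₄ - h n l₃ ≤ h n l₂ - h n l₁ ∧ 0 ≤ h n l₄ - h n l₃ := by
  have h24 : ∀ p, ⟪m, V p (l₂ p)⟫ ≤ ⟪m, V p (l₄ p)⟫ := by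
    intro p
    by_cases hps : p = s
    · subst hps; exact le_of_eq hs2
    · rw [(hne p hps).1, (hne p hps).2]; exact h13 p
  have h34 : ∀ p, ⟪m, V p (l₃ p)⟫ ≤ ⟪m, V p (l₄ p)⟫ := by
    intro p
    by_cases hps : p = s
    · subst hps; rw [← hs1, ← hs2]; exact hs12
    · rw [(hne p hps).2]
  intro n
  induction n with
  | zero => intro _; rw [h0, h0, h0, h0]; simp
  | succ n ih =>
    intro hn1
    have hnT : n < T := hn1
    set p : Fin T := ⟨n, hnT⟩ with hp
    have e1 : h (n + 1) l₁ = φ (w * h n l₁ + ⟪m, V p (l₁ p)⟫ + b) := hstep l₁ p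
    have e2 : h (n + 1) l₂ = φ (w * h n l₂ + ⟪m, V p (l₂ p)⟫ + b) := hstep l₂ p
    have e3 : h (n + 1) l₃ = φ (w * h n l₃ + ⟪m, V p (l₃ p)⟫ + b) := hstep l₃ p
    have e4 : h (n + 1) l₄ = φ (w * h n l₄ + ⟪m, V p (l₄ p)⟫ + b) := hstep l₄ p
    rw [e1, e2, e3, e4]
    set x₁ := w * h n l₁ + ⟪m, V p (l₁ p)⟫ + b with hx1
    set x₂ := w * h n l₂ + ⟪m, V p (l₂ p)⟫ + b with hx2
    set x₃ := w * h n l₃ + ⟪m, V p (l₃ p)⟫ + b with hx3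
    set x₄ := w * h n l₄ + ⟪m, V p (l₄ p)⟫ + b with hx4
    obtain ⟨ih1, ih2⟩ := ih (le_of_lt hn1)
    have hn' : n ≤ T := le_of_lt hn1
    have hm13 : h n l₁ ≤ h n l₃ := h_mono V m b w hw c₀ φ hφ h h0 hstep l₁ l₃ h13 n hn'
    -- increments at position p are equal across the two pairs and nonneg
    have ainc : ⟪m, V p (l₄ p)⟫ - ⟪m, V p (l₃ p)⟫ = ⟪m, V p (l₂ p)⟫ - ⟪m, V p (l₁ p)⟫ := by
      by_cases hps : p = s
      · subst hps; rw [hs1, hs2]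
      · rw [(hne p hps).1, (hne p hps).2]; ring
    have x13 : x₁ ≤ x₃ := by
      have := h13 p; nlinarith
    have xdiff : x₄ - x₃ ≤ x₂ - x₁ := by
      have hw' : w * (h n l₄ - h n l₃) ≤ w * (h n l₂ - h n l₁) :=
        mul_le_mul_of_nonneg_left ih1 hw.le
      nlinarith [ainc]
    have xpos : 0 ≤ x₄ - x₃ := by
      have := h34 p
      nlinarith
    constructor
    · set δ := x₄ - x₃ with hδ
      have hA : φ (x₃ + δ) - φ x₃ ≤ φ (x₁ + δ) - φ x₁ := concave_diff hconc x13 xpos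
      have hB : φ (x₁ + δ) ≤ φ x₂ := hφ (by simp only [hδ]; linarith)
      have hx4eq : x₃ + δ = x₄ := by simp only [hδ]; ring
      rw [hx4eq] at hA
      linarith
    · have := hφ (by linarith : x₃ ≤ x₄)
      linarith

end RNN

theorem stmt_8 (T k d : ℕ) [NeZero T] [NeZero k]
    (V : Fin T → Fin k → EuclideanSpace ℝ (Fin d))
    (m : EuclideanSpace ℝ (Fin d)) (b : ℝ) (w : ℝ) (hw : 0 < w)
    (y : ℝ) (hy : 0 < y) (c₀ : ℝ)
    (φ : ℝ → ℝ) (hφ : Monotone φ) (hconc : ConcaveOn ℝ Set.univ φ)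
    (hV : ∀ (p : Fin T) (t : Fin k), ⟪m, V p 0⟫ ≤ ⟪m, V p t⟫)
    -- hidden states of the RNN under transformation `l`
    (h : ℕ → (Fin T → Fin k) → ℝ)
    (h0 : ∀ l, h 0 l = c₀)
    (hstep : ∀ (l : Fin T → Fin k) (p : Fin T),
      h (p + 1) l = φ (w * h p l + ⟪m, V p (l p)⟫ + b))
    -- the attack set function built from the RNN output `y * h T l`
    (f : Finset (Fin T) → ℝ)
    (hf : ∀ S : Finset (Fin T),
      f S = (Finset.univ.filter
          fun l : Fin T → Fin k => transformSupport l ⊆ S).sup'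
        ⟨0, by simp [transformSupport]⟩ (fun l => y * h T l)) :
    ∀ X Y : Finset (Fin T), X ⊆ Y → ∀ s ∉ Y,
      f (insert s X) - f X ≥ f (insert s Y) - f Y := by
  -- choose best replacement at each position
  have htb : ∀ p : Fin T, ∃ t : Fin k, ∀ t' : Fin k, ⟪m, V p t'⟫ ≤ ⟪m, V p t⟫ := by
    intro p
    obtain ⟨t, -, ht⟩ := Finset.exists_max_image (Finset.univ : Finset (Fin k))
      (fun t => ⟪m, V p t⟫) ⟨0, Finset.mem_univ 0⟩
    exact ⟨t, fun t' => ht t' (Finset.mem_univ t')⟩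
  choose tbest htbest using htb
  set lbest : Finset (Fin T) → (Fin T → Fin k) :=
    fun S p => if p ∈ S then tbest p else 0 with hlbest
  -- the sup is attained at lbest S
  have hfval : ∀ S : Finset (Fin T), f S = y * h T (lbest S) := by
    intro S
    rw [hf S]
    apply le_antisymm
    · apply Finset.sup'_le
      intro l hl
      rw [Finset.mem_filter] at hl
      have hdom : ∀ p, ⟪m, V p (l p)⟫ ≤ ⟪m, V p (lbest S p)⟫ := by
        intro p
        by_cases hp0 : l p = 0
        · rw [hp0]; exact hV p _
        · have hpS : p ∈ S := hl.2 (by simp [transformSupport, hp0])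
          simp only [hlbest, if_pos hpS]
          exact htbest p (l p)
      exact mul_le_mul_of_nonneg_left
        (h_mono V m b w hw c₀ φ hφ h h0 hstep l (lbest S) hdom T le_rfl) hy.le
    · refine Finset.le_sup' (fun l => y * h T l) ?_
      rw [Finset.mem_filter]
      refine ⟨Finset.mem_univ _, ?_⟩
      intro p hp
      simp only [transformSupport, Finset.mem_filter] at hp
      by_contra hpS
      simp [hlbest, hpS] at hp
  intro X Y hXY s hs
  have hsX : s ∉ X := fun hsx => hs (hXY hsx)
  rw [hfval, hfval, hfval, hfval]
  have key := h_key V m b w hw c₀ φ hφ h h0 hstep hconc s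
    (lbest X) (lbest (insert s X)) (lbest Y) (lbest (insert s Y))
    (by
      intro p hps
      constructor <;> simp only [hlbest, Finset.mem_insert, hps, false_or])
    (by
      intro p
      by_cases hpX : p ∈ X
      · simp only [hlbest, if_pos hpX, if_pos (hXY hpX)]; exact le_rfl
      · simp only [hlbest, if_neg hpX]
        exact hV p _)
    (by simp only [hlbest, if_neg hsX, if_neg hs])
    (by simp only [hlbest, if_pos (Finset.mem_insert_self s X),
          if_pos (Finset.mem_insert_self s Y)])
    (by
      simp only [hlbest, if_neg hsX, if_pos (Finset.mem_insert_self s X)]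
      exact hV s _)
  have := (key T le_rfl).1
  nlinarith
end

section
/- In the one-dimensional-hidden-unit RNN setting, for 0 ≤ i ≤ j ≤ T and a transformation index l : Fin T → Fin k, define F_{i:j}(h, l) : ℝ → ℝ by F_{i:i}(h, l) = h and F_{i:p+1}(h, l) = φ(w · F_{i:p}(h, l) + ⟪m, V p (l p)⟫ + b) for i ≤ p < j. Assume φ : ℝ → ℝ is non-decreasing and concave on ℝ, w > 0, and ⟪m, V p t⟫ ≥ ⟪m, V p 0⟫ for all p, t. Then for all 0 ≤ i < j ≤ T, every δ > 0, every h : ℝ, every position s with i ≤ s < j and l s = 0, and every t : Fin k, we have F_{i:j}(h + δ, l) − F_{i:j}(h, l) ≥ F_{i:j}(h + δ, l') − F_{i:j}(h, l'), where l' = Function.update l s t. -/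
/-!
Track, along the recursion, the two trajectories started at `h` and `h + δ` under `l` and under
`l'`. Since `l'` only raises the input term `⟪m, V p (l' p)⟫ ≥ ⟪m, V p (l p)⟫`, the trajectories
under `l'` stay above those under `l`, and by monotonicity their gap stays nonnegative. A concave
nondecreasing `φ` turns a higher base point and a smaller increment into a smaller increment of
`φ`, so the gap under `l'` never exceeds the gap under `l`.
-/

open scoped RealInnerProductSpace

theorem ConcaveOn.map_add_sub_map_le_of_le {𝕜 : Type*} [Field 𝕜] [LinearOrder 𝕜]
    [IsStrictOrderedRing 𝕜] {φ : 𝕜 → 𝕜} (hφ : ConcaveOn 𝕜 Set.univ φ) {u v e : 𝕜}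
    (huv : u ≤ v) (he : 0 ≤ e) :
    φ (v + e) - φ v ≤ φ (u + e) - φ u := by
  rcases (show 0 ≤ v - u + e by linarith).eq_or_lt with hD | hD
  · obtain rfl : e = 0 := by linarith
    obtain rfl : v = u := by linarith
    rfl
  -- both `v` and `u + e` are convex combinations of the endpoints `u` and `v + e`
  have ha : 0 ≤ e / (v - u + e) := div_nonneg he hD.le
  have hc : 0 ≤ (v - u) / (v - u + e) := div_nonneg (by linarith) hD.le
  have hac : e / (v - u + e) + (v - u) / (v - u + e) = 1 := by field_simp; ring
  have hv := hφ.2 (Set.mem_univ u) (Set.mem_univ (v + e)) ha hc hac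
  have hue := hφ.2 (Set.mem_univ u) (Set.mem_univ (v + e)) hc ha (by linarith)
  simp only [smul_eq_mul] at hv hue
  have ev : e / (v - u + e) * u + (v - u) / (v - u + e) * (v + e) = v := by field_simp; ring
  have eue : (v - u) / (v - u + e) * u + e / (v - u + e) * (v + e) = u + e := by field_simp; ring
  rw [ev] at hv
  rw [eue] at hue
  linear_combination hv + hue - (φ u + φ (v + e)) * hac

def IncrementDominated (x X y Y : ℝ) : Prop :=
  x ≤ y ∧ y ≤ Y ∧ Y - y ≤ X - x

theorem IncrementDominated.map {φ : ℝ → ℝ} (hφ : Monotone φ) (hconc : ConcaveOn ℝ Set.univ φ)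
    {w c c' x X y Y : ℝ} (hw : 0 ≤ w) (hc : c ≤ c') (H : IncrementDominated x X y Y) :
    IncrementDominated (φ (w * x + c)) (φ (w * X + c)) (φ (w * y + c')) (φ (w * Y + c')) := by
  obtain ⟨hxy, hyY, hinc⟩ := H
  refine ⟨hφ (by nlinarith), hφ (by nlinarith), ?_⟩
  calc φ (w * Y + c') - φ (w * y + c')
      = φ ((w * y + c') + w * (Y - y)) - φ (w * y + c') := by ring_nf
    _ ≤ φ ((w * x + c) + w * (Y - y)) - φ (w * x + c) :=
        hconc.map_add_sub_map_le_of_le (by nlinarith) (by nlinarith)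
    _ ≤ φ ((w * x + c) + w * (X - x)) - φ (w * x + c) := by gcongr; exact hφ (by nlinarith)
    _ = φ (w * X + c) - φ (w * x + c) := by ring_nf

theorem inner_le_inner_update {T k d : ℕ} [NeZero k]
    {V : Fin T → Fin k → EuclideanSpace ℝ (Fin d)}
    {m : EuclideanSpace ℝ (Fin d)} (hV : ∀ (p : Fin T) (t : Fin k), ⟪m, V p 0⟫ ≤ ⟪m, V p t⟫)
    {l : Fin T → Fin k} {s : Fin T} (hls : l s = 0) (t : Fin k) (p : Fin T) :
    ⟪m, V p (l p)⟫ ≤ ⟪m, V p (Function.update l s t p)⟫ := by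
  rcases eq_or_ne p s with rfl | hps
  · simpa [hls] using hV p t
  · rw [Function.update_of_ne hps]

theorem stmt_9_general (T k d : ℕ) [NeZero k]
    (V : Fin T → Fin k → EuclideanSpace ℝ (Fin d))
    (m : EuclideanSpace ℝ (Fin d)) (b : ℝ) (w : ℝ) (hw : 0 < w)
    (φ : ℝ → ℝ) (hφ : Monotone φ) (hconc : ConcaveOn ℝ Set.univ φ)
    (hV : ∀ (p : Fin T) (t : Fin k), ⟪m, V p 0⟫ ≤ ⟪m, V p t⟫)
    -- `F i j h l` : hidden state at time `j` given hidden state `h` at time `i`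
    (F : ℕ → ℕ → ℝ → (Fin T → Fin k) → ℝ)
    (hFdiag : ∀ (i : ℕ) (h : ℝ) (l : Fin T → Fin k), F i i h l = h)
    (hFstep : ∀ (i : ℕ) (p : Fin T) (h : ℝ) (l : Fin T → Fin k), i ≤ (p : ℕ) →
      F i ((p : ℕ) + 1) h l = φ (w * F i p h l + ⟪m, V p (l p)⟫ + b)) :
    ∀ (i j : ℕ), i < j → j ≤ T → ∀ δ : ℝ, 0 < δ → ∀ (h : ℝ)
      (l : Fin T → Fin k) (s : Fin T), i ≤ (s : ℕ) → (s : ℕ) < j → l s = 0 →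
      ∀ t : Fin k,
        F i j (h + δ) l - F i j h l ≥
          F i j (h + δ) (Function.update l s t) - F i j h (Function.update l s t) := by
  intro i j hij hjT δ hδ h l s _ _ hls t
  have dominated : ∀ n, i ≤ n → n ≤ T → IncrementDominated (F i n h l) (F i n (h + δ) l)
      (F i n h (Function.update l s t)) (F i n (h + δ) (Function.update l s t)) := by
    intro n hin
    induction n, hin using Nat.le_induction with
    | base =>
      intro _
      simp only [IncrementDominated, hFdiag]
      exact ⟨le_rfl, by linarith, le_rfl⟩
    | succ n hin ih =>
      intro hnT
      have step := (ih (Nat.le_of_succ_le hnT)).map hφ hconc hw.le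
        (add_le_add_left (inner_le_inner_update hV hls t ⟨n, hnT⟩) b)
      simpa only [hFstep i ⟨n, hnT⟩ _ _ hin, add_assoc] using step
  exact (dominated j hij.le hjT).2.2

theorem stmt_9 (T k d : ℕ) [NeZero T] [NeZero k]
    (V : Fin T → Fin k → EuclideanSpace ℝ (Fin d))
    (m : EuclideanSpace ℝ (Fin d)) (b : ℝ) (w : ℝ) (hw : 0 < w)
    (φ : ℝ → ℝ) (hφ : Monotone φ) (hconc : ConcaveOn ℝ Set.univ φ)
    (hV : ∀ (p : Fin T) (t : Fin k), ⟪m, V p 0⟫ ≤ ⟪m, V p t⟫)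
    -- `F i j h l` : hidden state at time `j` given hidden state `h` at time `i`
    (F : ℕ → ℕ → ℝ → (Fin T → Fin k) → ℝ)
    (hFdiag : ∀ (i : ℕ) (h : ℝ) (l : Fin T → Fin k), F i i h l = h)
    (hFstep : ∀ (i : ℕ) (p : Fin T) (h : ℝ) (l : Fin T → Fin k), i ≤ (p : ℕ) →
      F i ((p : ℕ) + 1) h l = φ (w * F i p h l + ⟪m, V p (l p)⟫ + b)) :
    ∀ (i j : ℕ), i < j → j ≤ T → ∀ δ : ℝ, 0 < δ → ∀ (h : ℝ)
      (l : Fin T → Fin k) (s : Fin T), i ≤ (s : ℕ) → (s : ℕ) < j → l s = 0 →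
      ∀ t : Fin k,
        F i j (h + δ) l - F i j h l ≥
          F i j (h + δ) (Function.update l s t) - F i j h (Function.update l s t) :=
  stmt_9_general T k d V m b w hw φ hφ hconc hV F hFdiag hFstep
end

section
/- In the one-dimensional-hidden-unit RNN setting, with F_{i:j}(h, l) defined by F_{i:i}(h, l) = h and F_{i:p+1}(h, l) = φ(w · F_{i:p}(h, l) + ⟪m, V p (l p)⟫ + b), assume φ : ℝ → ℝ is non-decreasing and concave on ℝ, w > 0, and ⟪m, V p t⟫ ≥ ⟪m, V p 0⟫ for all p, t. Let l, l' : Fin T → Fin k be transformation indices such that l' extends l (for every p with l p ≠ 0, l' p = l p). Then for all 0 ≤ i ≤ j ≤ T, every δ > 0 and every h : ℝ, F_{i:j}(h + δ, l) − F_{i:j}(h, l) ≥ F_{i:j}(h + δ, l') − F_{i:j}(h, l'). -/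
open scoped RealInnerProductSpace

-- Key concavity fact: increments of a concave function over a fixed step are
-- non-increasing in the base point.
lemma concave_incr_le {φ : ℝ → ℝ} (hc : ConcaveOn ℝ Set.univ φ)
    {x y t : ℝ} (hxy : x ≤ y) (ht : 0 ≤ t) :
    φ (y + t) - φ y ≤ φ (x + t) - φ x := by
  rcases eq_or_lt_of_le ht with h0 | ht
  · simp [← h0]
  rcases eq_or_lt_of_le hxy with rfl | hxy
  · exact le_refl _
  · have hD : 0 < y + t - x := by linarith
    set a : ℝ := (y - x) / (y + t - x) with ha_def
    have ha0 : 0 ≤ a := div_nonneg (by linarith) hD.le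
    have ha1 : a ≤ 1 := by
      rw [ha_def, div_le_one hD]; linarith
    have hc0 : 0 ≤ 1 - a := by linarith
    have h1 := hc.2 (Set.mem_univ x) (Set.mem_univ (y + t)) ha0 hc0 (by ring)
    have h2 := hc.2 (Set.mem_univ x) (Set.mem_univ (y + t)) hc0 ha0 (by ring)
    have e1 : a • x + (1 - a) • (y + t) = x + t := by
      simp only [smul_eq_mul, ha_def]
      field_simp
      ring
    have e2 : (1 - a) • x + a • (y + t) = y := by
      simp only [smul_eq_mul, ha_def]
      field_simp
      ring
    rw [e1] at h1
    rw [e2] at h2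
    simp only [smul_eq_mul] at h1 h2
    ring_nf at h1 h2 ⊢
    linarith

theorem stmt_10 (T k d : ℕ) [NeZero T] [NeZero k]
    (V : Fin T → Fin k → EuclideanSpace ℝ (Fin d))
    (m : EuclideanSpace ℝ (Fin d)) (b : ℝ) (w : ℝ) (hw : 0 < w)
    (φ : ℝ → ℝ) (hφ : Monotone φ) (hconc : ConcaveOn ℝ Set.univ φ)
    (hV : ∀ (p : Fin T) (t : Fin k), ⟪m, V p 0⟫ ≤ ⟪m, V p t⟫)
    -- `F i j h l` : hidden state at time `j` given hidden state `h` at time `i`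
    (F : ℕ → ℕ → ℝ → (Fin T → Fin k) → ℝ)
    (hFdiag : ∀ (i : ℕ) (h : ℝ) (l : Fin T → Fin k), F i i h l = h)
    (hFstep : ∀ (i : ℕ) (p : Fin T) (h : ℝ) (l : Fin T → Fin k), i ≤ (p : ℕ) →
      F i ((p : ℕ) + 1) h l = φ (w * F i p h l + ⟪m, V p (l p)⟫ + b))
    (l l' : Fin T → Fin k) (hext : ∀ p : Fin T, l p ≠ 0 → l' p = l p) :
    ∀ (i j : ℕ), i ≤ j → j ≤ T → ∀ δ : ℝ, 0 < δ → ∀ h : ℝ,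
      F i j (h + δ) l - F i j h l ≥ F i j (h + δ) l' - F i j h l' := by
  intro i j hij hjT
  -- inner products are at least as large under l' as under l
  have hinner : ∀ p : Fin T, ⟪m, V p (l p)⟫ ≤ ⟪m, V p (l' p)⟫ := by
    intro p
    by_cases h0 : l p = 0
    · rw [h0]; exact hV p (l' p)
    · rw [hext p h0]
  -- monotonicity of F in h
  have mono : ∀ (l₀ : Fin T → Fin k) (j : ℕ), i ≤ j → j ≤ T →
      ∀ (h δ : ℝ), 0 ≤ δ → F i j h l₀ ≤ F i j (h + δ) l₀ := by
    intro l₀ j hij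
    induction j, hij using Nat.le_induction with
    | base =>
      intro _ h δ hδ
      rw [hFdiag, hFdiag]; linarith
    | succ n hn ih =>
      intro hnT h δ hδ
      have hnlt : n < T := by omega
      set p : Fin T := ⟨n, hnlt⟩ with hp_def
      have hp : (p : ℕ) = n := rfl
      have e1 := hFstep i p h l₀ (by rw [hp]; exact hn)
      have e2 := hFstep i p (h + δ) l₀ (by rw [hp]; exact hn)
      rw [hp] at e1 e2
      rw [e1, e2]
      apply hφ
      have := ih (by omega) h δ hδ
      nlinarith
  -- order: F under l' is at least F under l
  have ord : ∀ (j : ℕ), i ≤ j → j ≤ T → ∀ (h : ℝ), F i j h l ≤ F i j h l' := by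
    intro j hij
    induction j, hij using Nat.le_induction with
    | base =>
      intro _ h
      rw [hFdiag, hFdiag]
    | succ n hn ih =>
      intro hnT h
      have hnlt : n < T := by omega
      set p : Fin T := ⟨n, hnlt⟩ with hp_def
      have hp : (p : ℕ) = n := rfl
      have e1 := hFstep i p h l (by rw [hp]; exact hn)
      have e2 := hFstep i p h l' (by rw [hp]; exact hn)
      rw [hp] at e1 e2
      rw [e1, e2]
      apply hφ
      have h1 := ih (by omega) h
      have h2 := hinner p
      nlinarith
  -- main claim by induction
  intro δ hδ h
  revert hjT
  induction j, hij using Nat.le_induction with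
  | base =>
    intro _
    rw [hFdiag, hFdiag, hFdiag, hFdiag]
  | succ n hn ih =>
    intro hnT
    have hnT' : n ≤ T := by omega
    have hnlt : n < T := by omega
    have IH := ih hnT'
    set p : Fin T := ⟨n, hnlt⟩ with hp_def
    have hp : (p : ℕ) = n := rfl
    have e1 := hFstep i p (h + δ) l (by rw [hp]; exact hn)
    have e2 := hFstep i p h l (by rw [hp]; exact hn)
    have e3 := hFstep i p (h + δ) l' (by rw [hp]; exact hn)
    have e4 := hFstep i p h l' (by rw [hp]; exact hn)
    rw [hp] at e1 e2 e3 e4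
    rw [e1, e2, e3, e4]
    set A := F i p (h + δ) l
    set B := F i p h l
    set A' := F i p (h + δ) l'
    set B' := F i p h l'
    have hAB : B ≤ A := mono l n hn hnT' h δ hδ.le
    have hAB' : B' ≤ A' := mono l' n hn hnT' h δ hδ.le
    have hBB' : B ≤ B' := ord n hn hnT' h
    have hcc' : ⟪m, V p (l p)⟫ ≤ ⟪m, V p (l' p)⟫ := hinner p
    set x := w * B + ⟪m, V p (l p)⟫ + b with hx
    set y := w * B' + ⟪m, V p (l' p)⟫ + b with hy
    have hxy : x ≤ y := by rw [hx, hy]; nlinarith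
    set t := w * (A' - B') with htdef
    have ht : 0 ≤ t := by rw [htdef]; nlinarith
    set s := w * (A - B) with hsdef
    have hts : t ≤ s := by
      rw [htdef, hsdef]
      have : A' - B' ≤ A - B := IH
      nlinarith
    have ey : w * A' + ⟪m, V p (l' p)⟫ + b = y + t := by rw [hy, htdef]; ring
    have ex : w * A + ⟪m, V p (l p)⟫ + b = x + s := by rw [hx, hsdef]; ring
    rw [ey, ex]
    have key := concave_incr_le hconc hxy ht
    have hmono : φ (x + t) ≤ φ (x + s) := hφ (by linarith)
    linarith
end

section
/- In the one-dimensional-hidden-unit RNN setting, with hidden states h₀(l) = c₀ and h_{p+1}(l) = φ(w · h_p(l) + ⟪m, V p (l p)⟫ + b), assume φ : ℝ → ℝ is non-decreasing and concave on ℝ, w > 0, and ⟪m, V p t⟫ ≥ ⟪m, V p 0⟫ for all p, t. Let l, l' : Fin T → Fin k be transformation indices such that l' extends l (for every p with l p ≠ 0, l' p = l p), let s : Fin T satisfy l' s = 0 (so also l s = 0), and let t : Fin k. Then h_T(Function.update l s t) − h_T(l) ≥ h_T(Function.update l' s t) − h_T(l'). -/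
open scoped RealInnerProductSpace

/-- Key concavity inequality: for concave `φ`, `a ≤ b`, `0 ≤ d`,
`φ (b + d) + φ a ≤ φ (a + d) + φ b`. -/
lemma concave_key_aux12 {φ : ℝ → ℝ} (hconc : ConcaveOn ℝ Set.univ φ)
    {a b d : ℝ} (hab : a ≤ b) (hd : 0 ≤ d) :
    φ (b + d) + φ a ≤ φ (a + d) + φ b := by
  rcases eq_or_lt_of_le (by linarith : (0:ℝ) ≤ (b - a) + d) with h0 | h0
  · have h1 : b = a := by linarith
    have h2 : d = 0 := by linarith
    subst h1; subst h2; simp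
  · set sden : ℝ := (b - a) + d with hsden
    have hspos : 0 < sden := h0
    have hμ : 0 ≤ d / sden := div_nonneg hd hspos.le
    have hν : 0 ≤ (b - a) / sden := div_nonneg (by linarith) hspos.le
    have hsum : d / sden + (b - a) / sden = 1 := by
      field_simp
      rw [hsden]; ring
    have h1 := hconc.2 (Set.mem_univ a) (Set.mem_univ (b + d)) hμ hν hsum
    have h2 := hconc.2 (Set.mem_univ a) (Set.mem_univ (b + d)) hν hμ
      (by linarith : (b - a) / sden + d / sden = 1)
    simp only [smul_eq_mul] at h1 h2
    have e1 : d / sden * a + (b - a) / sden * (b + d) = b := by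
      field_simp; ring
    have e2 : (b - a) / sden * a + d / sden * (b + d) = a + d := by
      field_simp; ring
    rw [e1] at h1
    rw [e2] at h2
    have h3 := add_le_add h1 h2
    have hcomb : d / sden * φ a + (b - a) / sden * φ (b + d) +
        ((b - a) / sden * φ a + d / sden * φ (b + d)) =
        (d / sden + (b - a) / sden) * (φ a + φ (b + d)) := by ring
    rw [hcomb, hsum, one_mul] at h3
    linarith

/-- One step of the RNN preserves the diminishing-returns invariants. -/
lemma step_key_aux12 {φ : ℝ → ℝ} (hφ : Monotone φ) (hconc : ConcaveOn ℝ Set.univ φ)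
    {w A A' B B' xa xa' xb xb' bias : ℝ} (hw : 0 ≤ w)
    (hAA' : A ≤ A') (hxa : xa ≤ xa')
    (hF2 : w * (B' - A') + (xb' - xa') ≤ w * (B - A) + (xb - xa))
    (hF3 : 0 ≤ w * (B' - A') + (xb' - xa')) :
    (φ (w * B + xb + bias) - φ (w * A + xa + bias) ≥
      φ (w * B' + xb' + bias) - φ (w * A' + xa' + bias)) ∧
    0 ≤ φ (w * B' + xb' + bias) - φ (w * A' + xa' + bias) ∧
    φ (w * A + xa + bias) ≤ φ (w * A' + xa' + bias) := by
  have hwA : w * A ≤ w * A' := mul_le_mul_of_nonneg_left hAA' hw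
  have hab : w * A + xa + bias ≤ w * A' + xa' + bias := by linarith
  have key := concave_key_aux12 hconc hab hF3
  have e' : (w * A' + xa' + bias) + (w * (B' - A') + (xb' - xa')) = w * B' + xb' + bias := by
    ring
  rw [e'] at key
  have hm1 : φ ((w * A + xa + bias) + (w * (B' - A') + (xb' - xa'))) ≤ φ (w * B + xb + bias) :=
    hφ (by nlinarith)
  refine ⟨by linarith, ?_, hφ hab⟩
  have := hφ (by linarith : w * A' + xa' + bias ≤ w * B' + xb' + bias)
  linarith

theorem stmt_12 (T k d : ℕ) [NeZero T] [NeZero k]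
    (V : Fin T → Fin k → EuclideanSpace ℝ (Fin d))
    (m : EuclideanSpace ℝ (Fin d)) (b : ℝ) (w : ℝ) (hw : 0 < w) (c₀ : ℝ)
    (φ : ℝ → ℝ) (hφ : Monotone φ) (hconc : ConcaveOn ℝ Set.univ φ)
    (hV : ∀ (p : Fin T) (t : Fin k), ⟪m, V p 0⟫ ≤ ⟪m, V p t⟫)
    -- hidden states of the RNN under transformation `l`
    (h : ℕ → (Fin T → Fin k) → ℝ)
    (h0 : ∀ l, h 0 l = c₀)
    (hstep : ∀ (l : Fin T → Fin k) (p : Fin T),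
      h (p + 1) l = φ (w * h p l + ⟪m, V p (l p)⟫ + b))
    (l l' : Fin T → Fin k) (hext : ∀ p : Fin T, l p ≠ 0 → l' p = l p)
    (s : Fin T) (hs : l' s = 0) (t : Fin k) :
    h T (Function.update l s t) - h T l ≥ h T (Function.update l' s t) - h T l' := by
  have hls : l s = 0 := by
    by_contra h'
    exact h' (((hext s h').symm.trans hs))
  have hll' : ∀ p : Fin T, ⟪m, V p (l p)⟫ ≤ ⟪m, V p (l' p)⟫ := by
    intro p
    by_cases hp : l p = 0
    · rw [hp]; exact hV p (l' p)
    · rw [hext p hp]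
  have key : ∀ n : ℕ, n ≤ T →
      (h n (Function.update l s t) - h n l ≥ h n (Function.update l' s t) - h n l') ∧
      0 ≤ h n (Function.update l' s t) - h n l' ∧
      h n l ≤ h n l' := by
    intro n
    induction n with
    | zero => intro _; simp [h0]
    | succ n ih =>
      intro hn
      have hnT : n < T := hn
      obtain ⟨ih1, ih2, ih3⟩ := ih hnT.le
      set p : Fin T := ⟨n, hnT⟩ with hpdef
      have hpn : (p : ℕ) = n := rfl
      have eA := hstep l p
      have eA' := hstep l' p
      have eB := hstep (Function.update l s t) p
      have eB' := hstep (Function.update l' s t) p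
      rw [hpn] at eA eA' eB eB'
      have hub : Function.update l s t p = if p = s then t else l p :=
        Function.update_apply l s t p
      have hub' : Function.update l' s t p = if p = s then t else l' p :=
        Function.update_apply l' s t p
      rw [hub] at eB
      rw [hub'] at eB'
      by_cases hps : p = s
      · simp only [if_pos hps] at eB eB'
        rw [hps] at eA eA' eB eB'
        rw [hls] at eA
        rw [hs] at eA'
        rw [eA, eA', eB, eB']
        have hmul : w * (h n (Function.update l' s t) - h n l') ≤
            w * (h n (Function.update l s t) - h n l) :=
          mul_le_mul_of_nonneg_left (by linarith) hw.le
        exact step_key_aux12 hφ hconc hw.le ih3 le_rfl (by linarith)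
          (by nlinarith [hV s t, mul_nonneg hw.le ih2])
      · simp only [if_neg hps] at eB eB'
        rw [eA, eA', eB, eB']
        have hmul : w * (h n (Function.update l' s t) - h n l') ≤
            w * (h n (Function.update l s t) - h n l) :=
          mul_le_mul_of_nonneg_left (by linarith) hw.le
        exact step_key_aux12 hφ hconc hw.le ih3 (hll' p) (by linarith)
          (by nlinarith [mul_nonneg hw.le ih2])
  exact (key T le_rfl).1
end

section
/- In the one-dimensional-hidden-unit RNN setting, with hidden states h₀(l) = c₀ and h_{p+1}(l) = φ(w · h_p(l) + ⟪m, V p (l p)⟫ + b), assume φ : ℝ → ℝ is non-decreasing, w > 0, y > 0, and ⟪m, V p t⟫ ≥ ⟪m, V p 0⟫ for all p, t. If l' extends l (for every p with l p ≠ 0, l' p = l p), then the RNN output satisfies y · h_T(l) ≤ y · h_T(l'). -/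
open scoped RealInnerProductSpace

theorem stmt_15 (T k d : ℕ) [NeZero T] [NeZero k]
    (V : Fin T → Fin k → EuclideanSpace ℝ (Fin d))
    (m : EuclideanSpace ℝ (Fin d)) (b : ℝ) (w : ℝ) (hw : 0 < w)
    (y : ℝ) (hy : 0 < y) (c₀ : ℝ)
    (φ : ℝ → ℝ) (hφ : Monotone φ)
    (hV : ∀ (p : Fin T) (t : Fin k), ⟪m, V p 0⟫ ≤ ⟪m, V p t⟫)
    -- hidden states of the RNN under transformation `l`
    (h : ℕ → (Fin T → Fin k) → ℝ)
    (h0 : ∀ l, h 0 l = c₀)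
    (hstep : ∀ (l : Fin T → Fin k) (p : Fin T),
      h (p + 1) l = φ (w * h p l + ⟪m, V p (l p)⟫ + b))
    (l l' : Fin T → Fin k) (hext : ∀ p : Fin T, l p ≠ 0 → l' p = l p) :
    y * h T l ≤ y * h T l' := by
  have key : ∀ n, n ≤ T → h n l ≤ h n l' := by
    intro n
    induction n with
    | zero => intro _; rw [h0, h0]
    | succ n ih =>
      intro hn
      have hnT : n < T := hn
      set p : Fin T := ⟨n, hnT⟩ with hp
      have hinner : ⟪m, V p (l p)⟫ ≤ ⟪m, V p (l' p)⟫ := by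
        by_cases hz : l p = 0
        · rw [hz]; exact hV p (l' p)
        · rw [hext p hz]
      have := hstep l p
      have := hstep l' p
      simp only [hp] at *
      rw [hstep l p, hstep l' p]
      exact hφ (by nlinarith [ih (le_of_lt hnT)])
  exact mul_le_mul_of_nonneg_left (key T le_rfl) hy.le
end

section
/- Let n and d be positive integers, s : Fin n → ℝ, and W : ℝ. For each feature i define two embedding candidates in EuclideanSpace ℝ (Fin d): v i 0 = s i • e₀ (where e₀ is the standard basis vector supported on the first coordinate) and v i 1 = 0. Then there exists a transformation index l : Fin n → Fin 2 with ‖(Σ_{i : Fin n} v i (l i)) − W • e₀‖ = 0 if and only if there exists a finset S ⊆ Fin n with Σ_{i ∈ S} s i = W. -/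
open Finset

theorem surjective_filter_eq_zero {ι : Type*} [Fintype ι] [DecidableEq ι] :
    Function.Surjective fun l : ι → Fin 2 => ({i | l i = 0} : Finset ι) := by
  intro S
  refine ⟨fun i => if i ∈ S then 0 else 1, ?_⟩
  ext i
  by_cases hi : i ∈ S <;> simp [hi]

theorem sum_select_eq_sum_filter_smul {ι R M : Type*} [Fintype ι] [Semiring R]
    [AddCommMonoid M] [Module R M] (s : ι → R) (e : M) (v : ι → Fin 2 → M)
    (hv0 : ∀ i, v i 0 = s i • e) (hv1 : ∀ i, v i 1 = 0) (l : ι → Fin 2) :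
    ∑ i, v i (l i) = (∑ i with l i = 0, s i) • e := by
  rw [sum_filter, sum_smul]
  refine sum_congr rfl fun i _ => ?_
  generalize l i = j
  fin_cases j <;> simp [hv0, hv1]

theorem stmt_16_general (n d : ℕ) [NeZero d]
    (s : Fin n → ℝ) (W : ℝ)
    (v : Fin n → Fin 2 → EuclideanSpace ℝ (Fin d))
    (hv0 : ∀ i : Fin n, v i 0 = s i • EuclideanSpace.single (0 : Fin d) (1 : ℝ))
    (hv1 : ∀ i : Fin n, v i 1 = 0) :
    (∃ l : Fin n → Fin 2,
        ‖(∑ i, v i (l i)) - W • EuclideanSpace.single (0 : Fin d) (1 : ℝ)‖ = 0) ↔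
      (∃ S : Finset (Fin n), ∑ i ∈ S, s i = W) := by
  have he : EuclideanSpace.single (0 : Fin d) (1 : ℝ) ≠ 0 := by simp
  simp only [norm_eq_zero, sum_select_eq_sum_filter_smul s _ v hv0 hv1, ← sub_smul,
    smul_eq_zero, he, or_false, sub_eq_zero]
  exact (surjective_filter_eq_zero.exists (p := fun S => ∑ i ∈ S, s i = W)).symm

theorem stmt_16 (n d : ℕ) [NeZero n] [NeZero d]
    (s : Fin n → ℝ) (W : ℝ)
    (v : Fin n → Fin 2 → EuclideanSpace ℝ (Fin d))
    (hv0 : ∀ i : Fin n, v i 0 = s i • EuclideanSpace.single (0 : Fin d) (1 : ℝ))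
    (hv1 : ∀ i : Fin n, v i 1 = 0) :
    (∃ l : Fin n → Fin 2,
        ‖(∑ i, v i (l i)) - W • EuclideanSpace.single (0 : Fin d) (1 : ℝ)‖ = 0) ↔
      (∃ S : Finset (Fin n), ∑ i ∈ S, s i = W) :=
  stmt_16_general n d s W v hv0 hv1
end
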